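/- As m → ∞, c_{j,k}(m) ~ m^k · C(k,j) · (-1)^{k-j} · 2^j, where c_{j,k}(m) = (m)_j (Δ₋^j/j!)(2y-m)^k|_{y=0}, Δ₋ is the backward difference operator, and C(k,j) is the binomial coefficient. -/

import Mathlib

open Filter Topology

/-- Pochhammer symbol (rising factorial) `(x)_k = x(x+1)⋯(x+k-1)`. -/
noncomputable def poch (x : ℝ) (k : ℕ) : ℝ := ∏ i ∈ Finset.range k, (x + i)

/-- Backward difference operator `Δ₋ f(y) = f(y) - f(y-1)`. -/
def bdiff (f : ℝ → ℝ) : ℝ → ℝ := fun y => f y - f (y - 1)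

/-- `c_{j,k}(m) = (m)_j (Δ₋^j/j!)(2y-m)^k |_{y=0}`. -/
noncomputable def cpoly (j k : ℕ) (m : ℕ) : ℝ :=
  poch m j * (bdiff^[j] (fun y : ℝ => (2 * y - m) ^ k) 0 / (Nat.factorial j))

/-!
Expanding `(2y - m)^k` in powers of `y`, the `j`-th backward difference kills the powers `y^l`
with `l < j`, turns `y^j` into `j!`, and leaves constants in front of the powers `y^l`, `l > j`.
Hence `Δ₋^j (2y - m)^k |_{y=0}` is a polynomial in `m` of degree `k - j` with leading
coefficient `C(k,j) (-1)^{k-j} 2^j j!`, while `(m)_j ~ m^j`.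
-/

open Finset

theorem bdiff_iterate_apply (f : ℝ → ℝ) (n : ℕ) (y : ℝ) :
    bdiff^[n] f y = (fwdDiff 1)^[n] f (y - n) := by
  induction n generalizing y with
  | zero => simp
  | succ n ih =>
    rw [Function.iterate_succ_apply', Function.iterate_succ_apply', bdiff, ih, ih, fwdDiff]
    push_cast
    ring_nf

theorem bdiff_iterate_two_mul_sub_pow (j k : ℕ) (c : ℝ) :
    bdiff^[j] (fun y => (2 * y - c) ^ k) 0 =
      ∑ l ∈ range (k + 1),
        k.choose l * (-1) ^ (k - l) * 2 ^ l * (fwdDiff 1)^[j] (fun y : ℝ => y ^ l) (-j) *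
          c ^ (k - l) := by
  have hexpand : (fun y : ℝ => (2 * y - c) ^ k) =
      ∑ l ∈ range (k + 1), (k.choose l * (-1) ^ (k - l) * 2 ^ l * c ^ (k - l)) •
        fun y : ℝ => y ^ l := by
    ext y
    rw [sub_eq_add_neg, add_pow, Finset.sum_apply]
    refine sum_congr rfl fun l _ => ?_
    simp only [Pi.smul_apply, smul_eq_mul, mul_pow, neg_pow c]
    ring
  rw [bdiff_iterate_apply, hexpand, fwdDiff_iter_finsetSum, Finset.sum_apply, zero_sub]
  refine sum_congr rfl fun l _ => ?_
  rw [fwdDiff_iter_const_smul, Pi.smul_apply, smul_eq_mul]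
  ring

theorem tendsto_sum_mul_pow_div_pow {a : ℕ → ℝ} {j k : ℕ} (hjk : j ≤ k)
    (ha : ∀ l < j, a l = 0) :
    Tendsto (fun x : ℝ => (∑ l ∈ range (k + 1), a l * x ^ (k - l)) / x ^ (k - j))
      atTop (𝓝 (a j)) := by
  -- after the substitution `t = x⁻¹` the quotient is a polynomial in `t` with constant term `a j`
  have hpoly :
      Tendsto (fun t : ℝ => ∑ l ∈ range (k + 1), a l * t ^ (l - j)) (𝓝 0) (𝓝 (a j)) := by
    have hat0 : ∑ l ∈ range (k + 1), a l * (0 : ℝ) ^ (l - j) = a j := by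
      refine (sum_eq_single j (fun l _ hlj => ?_) (fun hj => ?_)).trans (by simp)
      · rcases hlj.lt_or_gt with hlt | hgt
        · simp [ha l hlt]
        · simp [zero_pow (Nat.sub_ne_zero_of_lt hgt)]
      · exact absurd (mem_range.mpr (Nat.lt_succ_of_le hjk)) hj
    exact hat0 ▸ (by fun_prop : Continuous _).tendsto 0
  refine (hpoly.comp tendsto_inv_atTop_zero).congr' ?_
  filter_upwards [eventually_ne_atTop 0] with x hx
  rw [Function.comp_apply, sum_div]
  refine sum_congr rfl fun l hl => ?_
  rcases lt_or_ge l j with hlj | hjl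
  · simp [ha l hlj]
  · have hsplit : x ^ (k - j) = x ^ (k - l) * x ^ (l - j) := by
      rw [← pow_add]; congr 1; have := mem_range.mp hl; omega
    rw [hsplit, inv_pow]
    field_simp

theorem tendsto_bdiff_iterate_two_mul_sub_pow_div_pow {j k : ℕ} (hjk : j ≤ k) :
    Tendsto (fun x : ℝ => bdiff^[j] (fun y => (2 * y - x) ^ k) 0 / x ^ (k - j)) atTop
      (𝓝 (k.choose j * (-1) ^ (k - j) * 2 ^ j * j.factorial)) := by
  simp_rw [bdiff_iterate_two_mul_sub_pow]
  convert tendsto_sum_mul_pow_div_pow hjk fun l hl => ?_ using 2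
  · rw [fwdDiff_iter_eq_factorial]; rfl
  · rw [fwdDiff_iter_pow_eq_zero_of_lt hl, Pi.zero_apply, mul_zero]

theorem tendsto_poch_div_pow (j : ℕ) :
    Tendsto (fun x : ℝ => poch x j / x ^ j) atTop (𝓝 1) := by
  have hprod : Tendsto (fun t : ℝ => ∏ i ∈ range j, (1 + i * t)) (𝓝 0) (𝓝 1) := by
    simpa using (by fun_prop : Continuous fun t : ℝ => ∏ i ∈ range j, (1 + i * t)).tendsto 0
  refine (hprod.comp tendsto_inv_atTop_zero).congr' ?_
  filter_upwards [eventually_ne_atTop 0] with x hx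
  rw [Function.comp_apply, poch, pow_eq_prod_const, ← prod_div_distrib]
  refine prod_congr rfl fun i _ => ?_
  field_simp

/-- as `m → ∞`, `c_{j,k}(m) ~ m^k · C(k,j) · (-1)^{k-j} · 2^j`. -/
theorem cpoly_asymp (j k : ℕ) (hjk : j ≤ k) :
    Tendsto
      (fun m : ℕ => cpoly j k m /
        ((m:ℝ) ^ k * (Nat.choose k j : ℝ) * (-1 : ℝ) ^ (k - j) * 2 ^ j))
      atTop (𝓝 1) := by
  set L : ℝ := k.choose j * (-1) ^ (k - j) * 2 ^ j * j.factorial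
  have hL : L ≠ 0 := by
    have := Nat.choose_pos hjk
    simp only [L]
    positivity
  have hlim := (((tendsto_poch_div_pow j).mul
    (tendsto_bdiff_iterate_two_mul_sub_pow_div_pow hjk)).div_const L).comp
    tendsto_natCast_atTop_atTop
  rw [one_mul, div_self hL] at hlim
  refine hlim.congr' ?_
  filter_upwards [eventually_ne_atTop 0] with m hm
  have hmk : (m : ℝ) ^ k = (m : ℝ) ^ j * (m : ℝ) ^ (k - j) := by
    rw [← pow_add, Nat.add_sub_cancel' hjk]
  have : (m : ℝ) ≠ 0 := Nat.cast_ne_zero.mpr hm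
  simp only [Function.comp_apply, cpoly, L, hmk]
  field_simp
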